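/- arXiv:2306.06508 — 4 statements merged into one kernel-verified Lean document; each statement's English description precedes it below -/
import Mathlib

section
/- (Theorem: client error bound) Suppose ĥ minimizes the empirical mixture risk ε̂_{α_i} over H, and h* minimizes the expected local risk ε_i over H. If (a) for all h ∈ H, |ε̂_{α_i}(h) − ε_{α_i}(h)| ≤ φ, and (b) for all h ∈ H and all j, |ε_i(h) − ε_j(h)| ≤ D(i,j), then ε_i(ĥ) ≤ ε_i(h*) + 2φ + 2∑_{j≠i} α_{ij} D(i,j). -/
/-!
Writing `ε_i - ε_{α_i} = ∑_j α_{ij} (ε_i - ε_j)` shows that the mixture risk is uniformly within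
`S = ∑_{j≠i} α_{ij} D(i,j)` of the local risk, so the empirical mixture risk is uniformly within
`φ + S` of it. A minimiser of a `δ`-uniform approximation of a function is `2δ`-optimal for it.
-/

open Finset

theorem abs_sub_weightedSum_le {ι : Type*} [Fintype ι] [DecidableEq ι]
    {α x d : ι → ℝ} (hα0 : ∀ j, 0 ≤ α j) (hα1 : ∑ j, α j = 1) {i : ι}
    (hd : ∀ j, |x i - x j| ≤ d j) :
    |x i - ∑ j, α j * x j| ≤ ∑ j ∈ univ.erase i, α j * d j := by
  have hdiff : x i - ∑ j, α j * x j = ∑ j, α j * (x i - x j) := by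
    simp only [mul_sub, sum_sub_distrib, ← sum_mul, hα1, one_mul]
  calc |x i - ∑ j, α j * x j|
      ≤ ∑ j, |α j * (x i - x j)| := hdiff ▸ abs_sum_le_sum_abs _ _
    _ = ∑ j ∈ univ.erase i, α j * |x i - x j| := by
        rw [← sum_erase _ (a := i) (by simp)]
        exact sum_congr rfl fun j _ => by rw [abs_mul, abs_of_nonneg (hα0 j)]
    _ ≤ ∑ j ∈ univ.erase i, α j * d j :=
        sum_le_sum fun j _ => mul_le_mul_of_nonneg_left (hd j) (hα0 j)

theorem le_add_two_mul_of_isMin_of_abs_sub_le {H : Type*} {R r : H → ℝ} {δ : ℝ}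
    (hδ : ∀ h, |R h - r h| ≤ δ) {a : H} (ha : ∀ h, R a ≤ R h) (b : H) :
    r a ≤ r b + 2 * δ := by
  have ha' := abs_le.mp (hδ a)
  have hb' := abs_le.mp (hδ b)
  linarith [ha b]

theorem client_error_bound_general {H : Type*} (N : ℕ)
    (ε εhat : Fin N → H → ℝ) (i : Fin N)
    (α : Fin N → ℝ) (hα0 : ∀ j, 0 ≤ α j) (hα1 : ∑ j, α j = 1)
    (φ : ℝ)
    (hgen : ∀ h : H, |(∑ j, α j * εhat j h) - (∑ j, α j * ε j h)| ≤ φ)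
    (D : Fin N → Fin N → ℝ)
    (hD : ∀ (h : H) (j : Fin N), |ε i h - ε j h| ≤ D i j)
    (hhat hstar : H)
    (hERM : ∀ h : H, ∑ j, α j * εhat j hhat ≤ ∑ j, α j * εhat j h) :
    ε i hhat ≤ ε i hstar + 2 * φ + 2 * ∑ j ∈ Finset.univ.erase i, α j * D i j := by
  set S := ∑ j ∈ univ.erase i, α j * D i j
  have hmix (h : H) : |ε i h - ∑ j, α j * ε j h| ≤ S :=
    abs_sub_weightedSum_le (x := fun j => ε j h) hα0 hα1 (hD h)
  have happrox (h : H) : |∑ j, α j * εhat j h - ε i h| ≤ φ + S :=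
    (abs_sub_le _ _ _).trans (add_le_add (hgen h) (abs_sub_comm (ε i h) _ ▸ hmix h))
  calc ε i hhat ≤ ε i hstar + 2 * (φ + S) :=
        le_add_two_mul_of_isMin_of_abs_sub_le happrox hERM hstar
    _ = ε i hstar + 2 * φ + 2 * S := by ring

/-- Client error bound: ε_i(ĥ) ≤ ε_i(h*) + 2φ + 2∑_{j≠i} α_{ij} D(i,j). -/
theorem client_error_bound {H : Type*} [Nonempty H] (N : ℕ)
    (ε εhat : Fin N → H → ℝ) (i : Fin N)
    (α : Fin N → ℝ) (hα0 : ∀ j, 0 ≤ α j) (hα1 : ∑ j, α j = 1)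
    (φ : ℝ) (hφ0 : 0 ≤ φ)
    (hgen : ∀ h : H, |(∑ j, α j * εhat j h) - (∑ j, α j * ε j h)| ≤ φ)
    (D : Fin N → Fin N → ℝ) (hD0 : ∀ j k, 0 ≤ D j k)
    (hD : ∀ (h : H) (j : Fin N), |ε i h - ε j h| ≤ D i j)
    (hhat hstar : H)
    (hERM : ∀ h : H, ∑ j, α j * εhat j hhat ≤ ∑ j, α j * εhat j h)
    (hOPT : ∀ h : H, ε i hstar ≤ ε i h) :
    ε i hhat ≤ ε i hstar + 2 * φ + 2 * ∑ j ∈ Finset.univ.erase i, α j * D i j :=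
  client_error_bound_general N ε εhat i α hα0 hα1 φ hgen D hD hhat hstar hERM
end

section
/- Let the coalition error bound be B(C) = ε* + 2μ/√(m_C) + (2/m_C)·∑_{j∈C, j≠i} m_j·D(i,j), where m_C = ∑_{j∈C} m_j. Fix a client i with m_i samples and threshold D_thr = μ√m/(2 m_i), where m ≥ m_C for any coalition C containing i. If coalition C containing i includes at least one client j with D(i,j) > D_thr, then the subcoalition C⁻ = {k ∈ C : D(i,k) ≤ D_thr} ∪ {i} satisfies B(C⁻) < B(C). In particular, any coalition minimizing B contains no client with distance strictly greater than D_thr from client i. -/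
/-!
Write `s` and `t` for the masses of `C` and of the near subcoalition `C⁻`, and `T` for `D_thr`.
Dropping the far clients raises the variance term `2μ/√·` by at most `μ (s - t) / (t √s)`,
the tangent-line bound for `x ↦ x^{-1/2}`. It lowers the averaged bias term by more than
`2 T m_i (s - t) / (s t)`: every far client contributes more than `T` per unit mass, and the
near clients other than `i` carry at most `T (t - m_i)`. The threshold is chosen so that
`2 T m_i = μ √m ≥ μ √s`, hence the gain beats the loss.
-/

open Finset

lemma inv_sub_inv_le_sq_sub_sq_div {u v : ℝ} (hv : 0 < v) (hvu : v ≤ u) :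
    v⁻¹ - u⁻¹ ≤ (u ^ 2 - v ^ 2) / (2 * v ^ 2 * u) := by
  have hu : 0 < u := hv.trans_le hvu
  rw [inv_eq_one_div, inv_eq_one_div, div_sub_div _ _ hv.ne' hu.ne',
    div_le_div_iff₀ (by positivity) (by positivity)]
  -- the difference of the two sides is `(u - v)² u v`
  nlinarith [mul_nonneg (mul_nonneg (sq_nonneg (u - v)) hu.le) hv.le]

lemma inv_sqrt_sub_inv_sqrt_le {s t : ℝ} (ht : 0 < t) (hts : t ≤ s) :
    (√t)⁻¹ - (√s)⁻¹ ≤ (s - t) / (2 * t * √s) := by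
  have h := inv_sub_inv_le_sq_sub_sq_div (Real.sqrt_pos.mpr ht) (Real.sqrt_le_sqrt hts)
  rwa [Real.sq_sqrt ht.le, Real.sq_sqrt (ht.le.trans hts)] at h

lemma mul_sub_div_lt_div_sub_div {T w s t a b : ℝ} (ht : 0 < t) (hts : t < s)
    (hb : b ≤ T * (t - w)) (ha : b + T * (s - t) < a) :
    T * w * (s - t) / (s * t) < a / s - b / t := by
  have hs : 0 < s := ht.trans hts
  rw [div_sub_div _ _ hs.ne' ht.ne', div_lt_div_iff_of_pos_right (by positivity)]
  nlinarith [mul_le_mul_of_nonneg_left hb (sub_nonneg.mpr hts.le)]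

lemma two_mul_div_sqrt_add_lt {μ T w s t a b : ℝ} (hμ : 0 ≤ μ) (ht : 0 < t) (hts : t < s)
    (hTw : μ * √s ≤ 2 * (T * w)) (hb : b ≤ T * (t - w)) (ha : b + T * (s - t) < a) :
    2 * μ / √t + 2 * b / t < 2 * μ / √s + 2 * a / s := by
  have hs : 0 < s := ht.trans hts
  have hgain := mul_sub_div_lt_div_sub_div ht hts hb ha
  have hloss : μ * ((√t)⁻¹ - (√s)⁻¹) ≤ T * w * (s - t) / (s * t) :=
    calc μ * ((√t)⁻¹ - (√s)⁻¹) ≤ μ * ((s - t) / (2 * t * √s)) :=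
          mul_le_mul_of_nonneg_left (inv_sqrt_sub_inv_sqrt_le ht hts.le) hμ
      _ = μ * √s / 2 * (s - t) / (s * t) := by
          field_simp
          rw [Real.sq_sqrt hs.le]
          ring
      _ ≤ T * w * (s - t) / (s * t) := by
          gcongr
          linarith
  linear_combination 2 * (hloss + hgain)

section Coalition

variable {ι : Type*} [DecidableEq ι]

/-- The coalition error bound `B(C)` of client `i`, with `d j = D(i, j)`. -/
noncomputable def coalitionErrorBound (ε μ : ℝ) (m d : ι → ℝ) (i : ι) (C : Finset ι) : ℝ :=
  ε + 2 * μ / √(∑ j ∈ C, m j) + 2 * ∑ j ∈ C.erase i, (m j / ∑ k ∈ C, m k) * d j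

lemma coalitionErrorBound_eq (ε μ : ℝ) (m d : ι → ℝ) (i : ι) (C : Finset ι) :
    coalitionErrorBound ε μ m d i C =
      ε + (2 * μ / √(∑ j ∈ C, m j) + 2 * (∑ j ∈ C.erase i, m j * d j) / ∑ j ∈ C, m j) := by
  rw [coalitionErrorBound, add_assoc, mul_div_assoc 2 (∑ j ∈ C.erase i, m j * d j), sum_div]
  simp only [div_mul_eq_mul_div]

lemma sum_erase_eq_sum_erase_filter_le_add_sum_filter_lt (f d : ι → ℝ) {T : ℝ} {i : ι}
    (C : Finset ι) (hdi : d i ≤ T) :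
    ∑ j ∈ C.erase i, f j =
      ∑ j ∈ (C.filter (d · ≤ T)).erase i, f j + ∑ j ∈ C.filter (T < d ·), f j := by
  have hfar : (C.filter (T < d ·)).erase i = C.filter (T < d ·) :=
    erase_eq_of_notMem (by simp [hdi])
  rw [← sum_filter_add_sum_filter_not (C.erase i) (d · ≤ T), filter_erase, filter_erase]
  simp only [not_le, hfar]

theorem coalitionErrorBound_filter_le_union_lt {ε μ T : ℝ} {m d : ι → ℝ} {i : ι} {C : Finset ι}
    (hμ : 0 ≤ μ) (hm : ∀ j ∈ C, 0 < m j) (hi : i ∈ C) (hdi : d i ≤ T)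
    (hfar : ∃ j ∈ C, T < d j) (hT : μ * √(∑ j ∈ C, m j) ≤ 2 * (T * m i)) :
    coalitionErrorBound ε μ m d i (C.filter (d · ≤ T) ∪ {i}) < coalitionErrorBound ε μ m d i C := by
  obtain ⟨j, hjC, hjfar⟩ := hfar
  rw [coalitionErrorBound_eq, coalitionErrorBound_eq, add_lt_add_iff_left,
    sum_erase_eq_sum_erase_filter_le_add_sum_filter_lt _ d C hdi]
  set Cnear := C.filter (d · ≤ T)
  set Cfar := C.filter (T < d ·)
  have hiCnear : i ∈ Cnear := mem_filter.mpr ⟨hi, hdi⟩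
  have hjCfar : j ∈ Cfar := mem_filter.mpr ⟨hjC, hjfar⟩
  have hmass : ∑ k ∈ C, m k = ∑ k ∈ Cnear, m k + ∑ k ∈ Cfar, m k := by
    rw [← sum_filter_add_sum_filter_not C (d · ≤ T)]
    simp only [not_le, Cnear, Cfar]
  have hnear_pos : 0 < ∑ k ∈ Cnear, m k :=
    sum_pos (fun k hk => hm k (mem_filter.mp hk).1) ⟨i, hiCnear⟩
  have hfar_pos : 0 < ∑ k ∈ Cfar, m k :=
    sum_pos (fun k hk => hm k (mem_filter.mp hk).1) ⟨j, hjCfar⟩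
  have hnear_bias : ∑ k ∈ Cnear.erase i, m k * d k ≤ T * (∑ k ∈ Cnear, m k - m i) := by
    rw [← sum_erase_eq_sub hiCnear, mul_sum]
    refine sum_le_sum fun k hk => ?_
    have hk := mem_filter.mp (mem_of_mem_erase hk)
    rw [mul_comm T]
    exact mul_le_mul_of_nonneg_left hk.2 (hm k hk.1).le
  have hfar_bias : T * ∑ k ∈ Cfar, m k < ∑ k ∈ Cfar, m k * d k := by
    rw [mul_sum]
    refine sum_lt_sum_of_nonempty ⟨j, hjCfar⟩ fun k hk => ?_
    have hk := mem_filter.mp hk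
    rw [mul_comm T]
    exact mul_lt_mul_of_pos_left hk.2 (hm k hk.1)
  rw [union_eq_left.mpr (singleton_subset_iff.mpr hiCnear)]
  refine two_mul_div_sqrt_add_lt hμ hnear_pos (by linarith) hT hnear_bias ?_
  rw [hmass, add_sub_cancel_left]
  linarith

end Coalition

theorem drop_far_clients_decreases_bound_general (N : ℕ) (m : Fin N → ℝ) (hm : ∀ j, 0 < m j)
    (D : Fin N → Fin N → ℝ) (hDii : ∀ i, D i i = 0)
    (μ : ℝ) (hμ : 0 < μ) (εstar : ℝ) (i : Fin N)
    (B : Finset (Fin N) → ℝ)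
    (hB : ∀ C : Finset (Fin N), B C =
      εstar + 2 * μ / Real.sqrt (∑ j ∈ C, m j) +
        2 * ∑ j ∈ C.erase i, (m j / ∑ k ∈ C, m k) * D i j)
    (Dthr : ℝ) (hDthr : Dthr = μ * Real.sqrt (∑ j, m j) / (2 * m i)) :
    (∀ C : Finset (Fin N), i ∈ C → (∃ j ∈ C, D i j > Dthr) →
      B (C.filter (fun k => D i k ≤ Dthr) ∪ {i}) < B C) ∧
    (∀ C : Finset (Fin N), i ∈ C →
      (∀ C' : Finset (Fin N), i ∈ C' → B C ≤ B C') →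
      ∀ j ∈ C, D i j ≤ Dthr) := by
  have hB' : B = coalitionErrorBound εstar μ m (D i) i := funext hB
  have hthr : 2 * (Dthr * m i) = μ * √(∑ j, m j) := by
    rw [hDthr]
    field_simp [(hm i).ne']
  have hDii_le : D i i ≤ Dthr := by
    rw [hDii, hDthr]
    exact div_nonneg (by positivity) (by linarith [hm i])
  have hdrop : ∀ C : Finset (Fin N), i ∈ C → (∃ j ∈ C, D i j > Dthr) →
      B (C.filter (fun k => D i k ≤ Dthr) ∪ {i}) < B C := fun C hi hfar => by
    rw [hB']
    refine coalitionErrorBound_filter_le_union_lt hμ.le (fun j _ => hm j) hi hDii_le hfar ?_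
    rw [hthr]
    exact mul_le_mul_of_nonneg_left
      (Real.sqrt_le_sqrt (sum_le_univ_sum_of_nonneg fun j => (hm j).le)) hμ.le
  refine ⟨hdrop, fun C hi hmin j hj => ?_⟩
  by_contra hfar
  exact (hdrop C hi ⟨j, hj, not_le.mp hfar⟩).not_ge
    (hmin _ (mem_union_right _ (mem_singleton_self i)))

/-- Picky clients: dropping all clients beyond the distance threshold strictly decreases
    the coalition error bound; hence any minimizing coalition has no client farther than
    D_thr from client i. -/
theorem drop_far_clients_decreases_bound (N : ℕ) (m : Fin N → ℝ) (hm : ∀ j, 0 < m j)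
    (D : Fin N → Fin N → ℝ) (hD0 : ∀ i j, 0 ≤ D i j) (hDii : ∀ i, D i i = 0)
    (μ : ℝ) (hμ : 0 < μ) (εstar : ℝ) (i : Fin N)
    (B : Finset (Fin N) → ℝ)
    (hB : ∀ C : Finset (Fin N), B C =
      εstar + 2 * μ / Real.sqrt (∑ j ∈ C, m j) +
        2 * ∑ j ∈ C.erase i, (m j / ∑ k ∈ C, m k) * D i j)
    (Dthr : ℝ) (hDthr : Dthr = μ * Real.sqrt (∑ j, m j) / (2 * m i)) :
    (∀ C : Finset (Fin N), i ∈ C → (∃ j ∈ C, D i j > Dthr) →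
      B (C.filter (fun k => D i k ≤ Dthr) ∪ {i}) < B C) ∧
    (∀ C : Finset (Fin N), i ∈ C →
      (∀ C' : Finset (Fin N), i ∈ C' → B C ≤ B C') →
      ∀ j ∈ C, D i j ≤ Dthr) :=
  drop_far_clients_decreases_bound_general N m hm D hDii μ hμ εstar i B hB Dthr hDthr
end

section
/- (Local training optimality) Under the coalition error bound B(C) = ε* + 2μ/√(m_C) + (2/m_C)∑_{j∈C−{i}} m_j D(i,j) with m_C = ∑_{j∈C} m_j, if D(i,j) > μ√m/(2 m_i) for every j ≠ i, then the singleton coalition {i} strictly minimizes B(C) over all coalitions C containing i. -/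
/-!
Leaving the singleton for a larger coalition C lowers the statistical term 2μ/√m_C, but by
no more than μ (m_C - m_i) / (m_i √m_C), because 2/√a - 2/√b ≤ (b - a) / (a √b) amounts to
(√b - √a)² ≥ 0. Since m_C ≤ m, this gain is at most (2/m_C)(m_C - m_i) · μ√m / (2 m_i), which
the distance term (2/m_C) ∑_{j ∈ C - {i}} m_j D(i,j) strictly exceeds once every D(i,j) is
above the threshold μ√m / (2 m_i).
-/

open Finset

lemma two_div_sqrt_sub_two_div_sqrt_le {a b : ℝ} (ha : 0 < a) (hb : 0 < b) :
    2 / √a - 2 / √b ≤ (b - a) / (a * √b) := by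
  obtain ⟨s, hs, rfl⟩ : ∃ s, 0 < s ∧ s ^ 2 = a := ⟨√a, by positivity, Real.sq_sqrt ha.le⟩
  obtain ⟨t, ht, rfl⟩ : ∃ t, 0 < t ∧ t ^ 2 = b := ⟨√b, by positivity, Real.sq_sqrt hb.le⟩
  rw [Real.sqrt_sq hs.le, Real.sqrt_sq ht.le, ← sub_nonneg]
  have h : (t ^ 2 - s ^ 2) / (s ^ 2 * t) - (2 / s - 2 / t) = (t - s) ^ 2 / (s ^ 2 * t) := by
    field_simp
    ring
  rw [h]
  positivity

lemma sub_mul_lt_sum_erase_mul {ι : Type*} [DecidableEq ι] {C : Finset ι} {i : ι}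
    {m D : ι → ℝ} {θ : ℝ} (hm : ∀ j ∈ C, 0 < m j) (hi : i ∈ C) (hC : C ≠ {i})
    (hD : ∀ j ∈ C, j ≠ i → θ < D j) :
    (∑ j ∈ C, m j - m i) * θ < ∑ j ∈ C.erase i, m j * D j := by
  rw [← sum_erase_eq_sub hi, sum_mul]
  refine sum_lt_sum_of_nonempty ((erase_nonempty hi).2 ((nontrivial_iff_ne_singleton hi).2 hC))
    fun j hj ↦ ?_
  exact mul_lt_mul_of_pos_left (hD j (mem_of_mem_erase hj) (ne_of_mem_erase hj))
    (hm j (mem_of_mem_erase hj))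

theorem local_training_optimal_general (N : ℕ) (m : Fin N → ℝ) (hm : ∀ j, 0 < m j)
    (D : Fin N → Fin N → ℝ)
    (μ : ℝ) (hμ : 0 < μ) (εstar : ℝ) (i : Fin N)
    (B : Finset (Fin N) → ℝ)
    (hB : ∀ C : Finset (Fin N), B C =
      εstar + 2 * μ / Real.sqrt (∑ j ∈ C, m j) +
        2 * ∑ j ∈ C.erase i, (m j / ∑ k ∈ C, m k) * D i j)
    (hfar : ∀ j : Fin N, j ≠ i → D i j > μ * Real.sqrt (∑ j, m j) / (2 * m i)) :
    ∀ C : Finset (Fin N), i ∈ C → C ≠ {i} → B {i} < B C := by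
  intro C hi hC
  set b := ∑ j ∈ C, m j
  set T := ∑ j, m j
  have ha := hm i
  have hb : 0 < b := sum_pos (fun j _ ↦ hm j) ⟨i, hi⟩
  have hab : m i ≤ b := single_le_sum (fun j _ ↦ (hm j).le) hi
  have hbT : √b ≤ √T :=
    Real.sqrt_le_sqrt (sum_le_sum_of_subset_of_nonneg (subset_univ C) fun j _ _ ↦ (hm j).le)
  have hdist := sub_mul_lt_sum_erase_mul (fun j _ ↦ hm j) hi hC fun j _ hj ↦ hfar j hj
  have hstat := mul_le_mul_of_nonneg_left (two_div_sqrt_sub_two_div_sqrt_le ha hb) hμ.le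
  have hgain : μ * ((b - m i) / (m i * √b)) ≤ 2 / b * ((b - m i) * (μ * √T / (2 * m i))) :=
    calc μ * ((b - m i) / (m i * √b)) = 2 / b * ((b - m i) * (μ * √b / (2 * m i))) := by
          field_simp
          rw [Real.sq_sqrt hb.le, mul_comm]
      _ ≤ _ := by gcongr
  have hB1 : B {i} = εstar + 2 * μ / √(m i) := by simp [hB]
  have hBC : B C = εstar + 2 * μ / √b + 2 / b * ∑ j ∈ C.erase i, m j * D i j := by
    rw [hB, mul_sum, mul_sum]
    congr 2 with j
    ring
  calc B {i} = εstar + 2 * μ / √b + μ * (2 / √(m i) - 2 / √b) := by rw [hB1]; ring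
    _ ≤ εstar + 2 * μ / √b + 2 / b * ((b - m i) * (μ * √T / (2 * m i))) := by linarith
    _ < B C := by rw [hBC]; gcongr

/-- Local training optimality: if every other client is beyond the distance threshold,
    the singleton coalition {i} strictly minimizes the error bound. -/
theorem local_training_optimal (N : ℕ) (m : Fin N → ℝ) (hm : ∀ j, 0 < m j)
    (D : Fin N → Fin N → ℝ) (hD0 : ∀ i j, 0 ≤ D i j) (hDii : ∀ i, D i i = 0)
    (μ : ℝ) (hμ : 0 < μ) (εstar : ℝ) (i : Fin N)
    (B : Finset (Fin N) → ℝ)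
    (hB : ∀ C : Finset (Fin N), B C =
      εstar + 2 * μ / Real.sqrt (∑ j ∈ C, m j) +
        2 * ∑ j ∈ C.erase i, (m j / ∑ k ∈ C, m k) * D i j)
    (hfar : ∀ j : Fin N, j ≠ i → D i j > μ * Real.sqrt (∑ j, m j) / (2 * m i)) :
    ∀ C : Finset (Fin N), i ∈ C → C ≠ {i} → B {i} < B C :=
  local_training_optimal_general N m hm D μ hμ εstar i B hB hfar
end

section
/- (Weighted sum comparison in subcoalition) With notation as in the coalition bound, if every j ∈ C⁻−{i} has D(i,j) ≤ D_thr and every j ∈ C⁺ has D(i,j) > D_thr, where C = C⁻ ∪ C⁺ disjointly, i ∈ C⁻, and C⁺ ≠ ∅, then ∑_{j∈C−{i}} (m_j/m_C) D(i,j) − ∑_{j∈C⁻−{i}} (m_j/m_{C⁻}) D(i,j) > (1/m_{C⁻} − 1/m_C)·m_i·D_thr. -/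
/-!
Relative to `C⁻` the weight of `j ∈ C⁻ - {i}` drops from `m_j / m_{C⁻}` to `m_j / m_C`, while the
clients of `C⁺` enter with weight `m_j / m_C`. As `D(i, j) ≤ D_thr` on the first set, the loss is at
most `D_thr` times the weight lost; as `D(i, j) > D_thr` on `C⁺`, the gain exceeds `D_thr` times the
weight gained. The net weight gained is `(m_{C⁻} - m_i) (1/m_C - 1/m_{C⁻}) + m_{C⁺} / m_C
= m_i (1/m_{C⁻} - 1/m_C)`.
-/

open Finset

namespace Finset

variable {ι : Type*} {s : Finset ι} {c f : ι → ℝ} {t : ℝ}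

lemma sum_mul_le_sum_mul_of_nonpos (hc : ∀ j ∈ s, c j ≤ 0) (hf : ∀ j ∈ s, f j ≤ t) :
    (∑ j ∈ s, c j) * t ≤ ∑ j ∈ s, c j * f j := by
  rw [sum_mul]
  exact sum_le_sum fun j hj => mul_le_mul_of_nonpos_left (hf j hj) (hc j hj)

lemma sum_mul_lt_sum_mul_of_pos (hs : s.Nonempty) (hc : ∀ j ∈ s, 0 < c j)
    (hf : ∀ j ∈ s, t < f j) : (∑ j ∈ s, c j) * t < ∑ j ∈ s, c j * f j := by
  rw [sum_mul]
  exact sum_lt_sum_of_nonempty hs fun j hj => mul_lt_mul_of_pos_left (hf j hj) (hc j hj)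

lemma sum_erase_union_sub_sum_erase [DecidableEq ι] {A B : Finset ι} {i : ι}
    (hdisj : Disjoint A B) (hi : i ∈ A) (f g : ι → ℝ) :
    ∑ j ∈ (A ∪ B).erase i, f j - ∑ j ∈ A.erase i, g j =
      ∑ j ∈ A.erase i, (f j - g j) + ∑ j ∈ B, f j := by
  have hiB : i ∉ B := disjoint_left.mp hdisj hi
  rw [erase_union_distrib, erase_eq_of_notMem hiB,
    sum_union (hdisj.mono_left (erase_subset i A)), sum_sub_distrib]
  ring

end Finset

theorem weighted_sum_subcoalition_general (N : ℕ) (m : Fin N → ℝ) (hm : ∀ j, 0 < m j)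
    (i : Fin N) (Dthr : ℝ)
    (D : Fin N → Fin N → ℝ)
    (Cminus Cplus : Finset (Fin N)) (hdisj : Disjoint Cminus Cplus)
    (hi : i ∈ Cminus) (hplus : Cplus.Nonempty)
    (hnear : ∀ j ∈ Cminus.erase i, D i j ≤ Dthr)
    (hfar : ∀ j ∈ Cplus, D i j > Dthr) :
    (∑ j ∈ (Cminus ∪ Cplus).erase i, (m j / ∑ k ∈ Cminus ∪ Cplus, m k) * D i j) -
      (∑ j ∈ Cminus.erase i, (m j / ∑ k ∈ Cminus, m k) * D i j) >
        (1 / ∑ k ∈ Cminus, m k - 1 / ∑ k ∈ Cminus ∪ Cplus, m k) * m i * Dthr := by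
  set a := ∑ k ∈ Cminus, m k
  set b := ∑ k ∈ Cminus ∪ Cplus, m k
  have ha : 0 < a := sum_pos (fun j _ => hm j) ⟨i, hi⟩
  have hb_split : b = a + ∑ j ∈ Cplus, m j := sum_union hdisj
  have hab : a ≤ b := by linarith [sum_pos (fun j _ => hm j) hplus]
  have hb0 : 0 < b := ha.trans_le hab
  have hlost : ∑ j ∈ Cminus.erase i, (m j / b - m j / a) = (a - m i) * (1 / b - 1 / a) := by
    rw [sum_sub_distrib, ← sum_div, ← sum_div, sum_erase_eq_sub hi]
    ring
  have hgained : ∑ j ∈ Cplus, m j / b = (b - a) / b := by rw [← sum_div, hb_split]; ring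
  have hloss : (a - m i) * (1 / b - 1 / a) * Dthr ≤
      ∑ j ∈ Cminus.erase i, (m j / b * D i j - m j / a * D i j) := by
    simp only [← sub_mul, ← hlost]
    exact sum_mul_le_sum_mul_of_nonpos
      (fun j _ => sub_nonpos.mpr (div_le_div_of_nonneg_left (hm j).le ha hab)) hnear
  have hgain : (b - a) / b * Dthr < ∑ j ∈ Cplus, m j / b * D i j :=
    hgained ▸ sum_mul_lt_sum_mul_of_pos hplus (fun j _ => div_pos (hm j) hb0) hfar
  rw [gt_iff_lt, sum_erase_union_sub_sum_erase hdisj hi]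
  calc (1 / a - 1 / b) * m i * Dthr
      = (a - m i) * (1 / b - 1 / a) * Dthr + (b - a) / b * Dthr := by field_simp; ring
    _ < _ := add_lt_add_of_le_of_lt hloss hgain

/-- Weighted sum comparison in subcoalition:
    ∑_{j∈C−{i}} (mⱼ/m_C) D(i,j) − ∑_{j∈C⁻−{i}} (mⱼ/m_{C⁻}) D(i,j)
      > (1/m_{C⁻} − 1/m_C)·m_i·D_thr. -/
theorem weighted_sum_subcoalition (N : ℕ) (m : Fin N → ℝ) (hm : ∀ j, 0 < m j)
    (i : Fin N) (Dthr : ℝ) (hDthr : 0 < Dthr)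
    (D : Fin N → Fin N → ℝ) (hD0 : ∀ j, 0 ≤ D i j)
    (Cminus Cplus : Finset (Fin N)) (hdisj : Disjoint Cminus Cplus)
    (hi : i ∈ Cminus) (hplus : Cplus.Nonempty)
    (hnear : ∀ j ∈ Cminus.erase i, D i j ≤ Dthr)
    (hfar : ∀ j ∈ Cplus, D i j > Dthr) :
    (∑ j ∈ (Cminus ∪ Cplus).erase i, (m j / ∑ k ∈ Cminus ∪ Cplus, m k) * D i j) -
      (∑ j ∈ Cminus.erase i, (m j / ∑ k ∈ Cminus, m k) * D i j) >
        (1 / ∑ k ∈ Cminus, m k - 1 / ∑ k ∈ Cminus ∪ Cplus, m k) * m i * Dthr :=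
  weighted_sum_subcoalition_general N m hm i Dthr D Cminus Cplus hdisj hi hplus hnear hfar
end
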